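/- arXiv:1006.5603 — 5 statements merged into one kernel-verified Lean document; each statement's English description precedes it below -/
import Mathlib

section
/- For every $u \in C_c^\infty((0,1))$ one has $\int_0^1 |u'(t)|^2\,dt - \frac{1}{4}\int_0^1 t^{-2}|u(t)|^2\,dt \ge \frac{1}{4}\int_0^1 t^{-2}|\log t|^{-2}|u(t)|^2\,dt$. -/
open MeasureTheory Set

/-- Hardy–Leray inequality on the interval (0,1). -/
theorem hardy_leray_interval (u : ℝ → ℝ) (hu : ContDiff ℝ (⊤ : ℕ∞) u)
    (hcs : HasCompactSupport u) (hsupp : tsupport u ⊆ Ioo (0 : ℝ) 1) :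
    (∫ t in Ioo (0 : ℝ) 1, (deriv u t) ^ 2)
      - (1 / 4) * ∫ t in Ioo (0 : ℝ) 1, (t ^ 2)⁻¹ * (u t) ^ 2 ≥
      (1 / 4) * ∫ t in Ioo (0 : ℝ) 1,
        (t ^ 2)⁻¹ * ((Real.log t) ^ 2)⁻¹ * (u t) ^ 2 := by
  set W : ℝ → ℝ := fun t => (2 * t)⁻¹ + (2 * t * Real.log t)⁻¹ with hWdef
  set g : ℝ → ℝ := fun t => u t ^ 2 * W t with hgdef
  set F : ℝ → ℝ := fun t => deriv u t - u t * W t with hFdef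
  have hud : Differentiable ℝ u := hu.differentiable (by simp)
  have hcderiv : Continuous (deriv u) := hu.continuous_deriv (by simp)
  -- outside tsupport u, things vanish eventually
  have hev : ∀ x : ℝ, x ∉ tsupport u → u =ᶠ[nhds x] 0 :=
    fun x hx => notMem_tsupport_iff_eventuallyEq.mp hx
  have hevd : ∀ x : ℝ, x ∉ tsupport u → deriv u =ᶠ[nhds x] 0 := by
    intro x hx
    have h := (hev x hx).deriv
    have h0 : deriv (0 : ℝ → ℝ) = 0 := by
      ext y; rw [show (0:ℝ→ℝ) = fun _ => (0:ℝ) from rfl]; simp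
    rwa [h0] at h
  -- facts about t in Ioo 0 1
  have hfacts : ∀ t ∈ Ioo (0:ℝ) 1, t ≠ 0 ∧ Real.log t ≠ 0 := by
    rintro t ⟨h0, h1⟩
    exact ⟨ne_of_gt h0, ne_of_lt (Real.log_neg h0 h1)⟩
  -- W is smooth on Ioo 0 1
  have hWc : ∀ t ∈ Ioo (0:ℝ) 1, ContDiffAt ℝ (⊤ : ℕ∞) W t := by
    intro t ht
    obtain ⟨ht0, htl⟩ := hfacts t ht
    have h1 : ContDiffAt ℝ (⊤ : ℕ∞) (fun t : ℝ => 2 * t) t := contDiffAt_const.mul contDiffAt_id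
    have h2 : ContDiffAt ℝ (⊤ : ℕ∞) (fun t : ℝ => 2 * t * Real.log t) t :=
      h1.mul (Real.contDiffAt_log.mpr ht0)
    exact (h1.inv (by simpa using ht0)).add (h2.inv (by
      simp [ht0, htl]))
  -- g is smooth everywhere
  have hgc : ContDiff ℝ (⊤ : ℕ∞) g := by
    rw [contDiff_iff_contDiffAt]
    intro x
    by_cases hx : x ∈ Ioo (0:ℝ) 1
    · exact ((hu.contDiffAt).pow 2).mul (hWc x hx)
    · have hxs : x ∉ tsupport u := fun h => hx (hsupp h)
      have : g =ᶠ[nhds x] 0 := by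
        filter_upwards [hev x hxs] with y hy
        simp [hgdef, hy]
      exact contDiffAt_const.congr_of_eventuallyEq this
  -- g has compact support
  have hgcs : HasCompactSupport g := by
    apply HasCompactSupport.intro hcs
    intro x hx
    simp [hgdef, image_eq_zero_of_notMem_tsupport hx]
  -- derivative formula for g on Ioo 0 1
  have hgderiv : ∀ t ∈ Ioo (0:ℝ) 1,
      deriv g t = (2 * u t * deriv u t) * W t
        + u t ^ 2 * (-2 / (2 * t) ^ 2 + -(2 * Real.log t + 2 * t * t⁻¹) / (2 * t * Real.log t) ^ 2) := by
    intro t ht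
    obtain ⟨ht0, htl⟩ := hfacts t ht
    have hd1 : HasDerivAt (fun t : ℝ => 2 * t) 2 t := by
      simpa using (hasDerivAt_id t).const_mul (2:ℝ)
    have hd2 : HasDerivAt (fun t : ℝ => (2 * t)⁻¹) (-2 / (2 * t) ^ 2) t :=
      hd1.inv (by simpa using ht0)
    have hd3 : HasDerivAt Real.log t⁻¹ t := Real.hasDerivAt_log ht0
    have hd4 : HasDerivAt (fun t : ℝ => 2 * t * Real.log t)
        (2 * Real.log t + 2 * t * t⁻¹) t := hd1.mul hd3
    have hd5 : HasDerivAt (fun t : ℝ => (2 * t * Real.log t)⁻¹)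
        (-(2 * Real.log t + 2 * t * t⁻¹) / (2 * t * Real.log t) ^ 2) t :=
      hd4.inv (by simp [ht0, htl])
    have hdu : HasDerivAt u (deriv u t) t := (hud t).hasDerivAt
    have hdu2 : HasDerivAt (fun t => u t ^ 2) (2 * u t * deriv u t) t := by
      exact (by simpa using hdu.pow 2 : HasDerivAt (u ^ 2) (2 * u t * deriv u t) t)
    have hW' : HasDerivAt W
        (-2 / (2 * t) ^ 2 + -(2 * Real.log t + 2 * t * t⁻¹) / (2 * t * Real.log t) ^ 2) t :=
      hd2.add hd5
    have hg' : HasDerivAt g ((2 * u t * deriv u t) * W t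
        + u t ^ 2 * (-2 / (2 * t) ^ 2 + -(2 * Real.log t + 2 * t * t⁻¹) / (2 * t * Real.log t) ^ 2)) t := by
      exact (by simpa [mul_comm] using hdu2.mul hW' : HasDerivAt ((fun t => u t ^ 2) * W) ((2 * u t * deriv u t) * W t
        + u t ^ 2 * (-2 / (2 * t) ^ 2 + -(2 * Real.log t + 2 * t * t⁻¹) / (2 * t * Real.log t) ^ 2)) t)
    exact hg'.deriv
  -- pointwise identity
  have hident : ∀ t ∈ Ioo (0:ℝ) 1,
      (deriv u t) ^ 2 - (1/4) * ((t ^ 2)⁻¹ * (u t) ^ 2)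
        - (1/4) * ((t ^ 2)⁻¹ * ((Real.log t) ^ 2)⁻¹ * (u t) ^ 2)
      = F t ^ 2 + deriv g t := by
    intro t ht
    obtain ⟨ht0, htl⟩ := hfacts t ht
    rw [hgderiv t ht]
    simp only [hFdef, hWdef]
    field_simp
    ring
  -- continuity of the various integrands
  have hBcont : Continuous (fun t : ℝ => (t ^ 2)⁻¹ * (u t) ^ 2) := by
    rw [continuous_iff_continuousAt]
    intro x
    by_cases hx : x = 0
    · subst hx
      have hxs : (0:ℝ) ∉ tsupport u := fun h => by simpa using (hsupp h).1
      have : (fun t : ℝ => (t ^ 2)⁻¹ * (u t) ^ 2) =ᶠ[nhds (0:ℝ)] 0 := by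
        filter_upwards [hev 0 hxs] with y hy; simp [hy]
      exact continuousAt_const.congr this.symm
    · exact ((continuousAt_id.pow 2).inv₀ (pow_ne_zero 2 hx)).mul
        ((hu.continuous.continuousAt).pow 2)
  have hCcont : Continuous (fun t : ℝ => (t ^ 2)⁻¹ * ((Real.log t) ^ 2)⁻¹ * (u t) ^ 2) := by
    rw [continuous_iff_continuousAt]
    intro x
    by_cases hx : x ∈ Ioo (0:ℝ) 1
    · obtain ⟨ht0, htl⟩ := hfacts x hx
      exact (((continuousAt_id.pow 2).inv₀ (pow_ne_zero 2 ht0)).mul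
        (((Real.continuousAt_log ht0).pow 2).inv₀ (pow_ne_zero 2 htl))).mul
        ((hu.continuous.continuousAt).pow 2)
    · have hxs : x ∉ tsupport u := fun h => hx (hsupp h)
      have : (fun t : ℝ => (t ^ 2)⁻¹ * ((Real.log t) ^ 2)⁻¹ * (u t) ^ 2) =ᶠ[nhds x] 0 := by
        filter_upwards [hev x hxs] with y hy; simp [hy]
      exact continuousAt_const.congr this.symm
  have hFcont : Continuous F := by
    rw [continuous_iff_continuousAt]
    intro x
    by_cases hx : x ∈ Ioo (0:ℝ) 1
    · exact (hcderiv.continuousAt).sub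
        ((hu.continuous.continuousAt).mul (hWc x hx).continuousAt)
    · have hxs : x ∉ tsupport u := fun h => hx (hsupp h)
      have : F =ᶠ[nhds x] 0 := by
        filter_upwards [hev x hxs, hevd x hxs] with y hy hy'
        simp [hFdef, hy, hy']
      exact continuousAt_const.congr this.symm
  have hgd : Continuous (deriv g) := hgc.continuous_deriv (by simp)
  have hgdcs : HasCompactSupport (deriv g) := hgcs.deriv
  have hFcs : HasCompactSupport F := by
    apply HasCompactSupport.intro hcs
    intro x hx
    simp [hFdef, image_eq_zero_of_notMem_tsupport hx,
      show deriv u x = 0 from (hevd x hx).self_of_nhds]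
  -- integrabilities on Ioo 0 1
  have hIA : IntegrableOn (fun t : ℝ => (deriv u t) ^ 2) (Ioo 0 1) volume := by
    apply ContinuousOn.integrableOn_compact isCompact_Icc
      ((hcderiv.pow 2).continuousOn) |>.mono_set Ioo_subset_Icc_self
  have hIB : IntegrableOn (fun t : ℝ => (t ^ 2)⁻¹ * (u t) ^ 2) (Ioo 0 1) volume :=
    (ContinuousOn.integrableOn_compact isCompact_Icc hBcont.continuousOn).mono_set
      Ioo_subset_Icc_self
  have hIC : IntegrableOn (fun t : ℝ => (t ^ 2)⁻¹ * ((Real.log t) ^ 2)⁻¹ * (u t) ^ 2)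
      (Ioo 0 1) volume :=
    (ContinuousOn.integrableOn_compact isCompact_Icc hCcont.continuousOn).mono_set
      Ioo_subset_Icc_self
  have hIF : IntegrableOn (fun t => F t ^ 2) (Ioo 0 1) volume :=
    (ContinuousOn.integrableOn_compact isCompact_Icc
      (hFcont.pow 2).continuousOn).mono_set Ioo_subset_Icc_self
  have hIg : IntegrableOn (deriv g) (Ioo 0 1) volume :=
    (ContinuousOn.integrableOn_compact isCompact_Icc hgd.continuousOn).mono_set
      Ioo_subset_Icc_self
  -- FTC: integral of deriv g over Ioo 0 1 is 0
  have hg0 : g 0 = 0 := by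
    have : (0:ℝ) ∉ tsupport u := fun h => by simpa using (hsupp h).1
    simp [hgdef, image_eq_zero_of_notMem_tsupport this]
  have hg1 : g 1 = 0 := by
    have : (1:ℝ) ∉ tsupport u := fun h => by simpa using (hsupp h).2
    simp [hgdef, image_eq_zero_of_notMem_tsupport this]
  have hgint : ∫ t in Ioo (0:ℝ) 1, deriv g t = 0 := by
    rw [← integral_Ioc_eq_integral_Ioo, ← intervalIntegral.integral_of_le (by norm_num : (0:ℝ) ≤ 1)]
    rw [intervalIntegral.integral_deriv_eq_sub
      (fun x _ => (hgc.differentiable (by simp)).differentiableAt)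
      (hgd.intervalIntegrable 0 1)]
    rw [hg0, hg1]; ring
  -- put everything together
  rw [ge_iff_le, ← sub_nonneg]
  have h1 : IntegrableOn (fun t : ℝ => (deriv u t) ^ 2 - 1 / 4 * ((t ^ 2)⁻¹ * (u t) ^ 2))
      (Ioo 0 1) volume := hIA.sub (hIB.const_mul _)
  have key : ∫ t in Ioo (0 : ℝ) 1, ((deriv u t) ^ 2 - 1 / 4 * ((t ^ 2)⁻¹ * (u t) ^ 2)
        - 1 / 4 * ((t ^ 2)⁻¹ * ((Real.log t) ^ 2)⁻¹ * (u t) ^ 2))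
      = (∫ t in Ioo (0 : ℝ) 1, (deriv u t) ^ 2)
      - (1 / 4) * (∫ t in Ioo (0 : ℝ) 1, (t ^ 2)⁻¹ * (u t) ^ 2)
      - (1 / 4) * (∫ t in Ioo (0 : ℝ) 1, (t ^ 2)⁻¹ * ((Real.log t) ^ 2)⁻¹ * (u t) ^ 2) := by
    rw [integral_sub h1 (hIC.const_mul _), integral_sub hIA (hIB.const_mul _),
      integral_const_mul, integral_const_mul]
  have key2 : ∫ t in Ioo (0 : ℝ) 1, ((deriv u t) ^ 2 - 1 / 4 * ((t ^ 2)⁻¹ * (u t) ^ 2)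
        - 1 / 4 * ((t ^ 2)⁻¹ * ((Real.log t) ^ 2)⁻¹ * (u t) ^ 2))
      = ∫ t in Ioo (0 : ℝ) 1, (F t ^ 2 + deriv g t) :=
    setIntegral_congr_fun measurableSet_Ioo (fun t ht => hident t ht)
  have hnn : 0 ≤ ∫ t in Ioo (0 : ℝ) 1, (F t ^ 2 + deriv g t) := by
    rw [integral_add hIF hIg, hgint, add_zero]
    exact setIntegral_nonneg measurableSet_Ioo (fun t _ => sq_nonneg _)
  linarith [key, key2, hnn]
end

section
/- For every $\theta \in \mathbb{R}$ and every $v \in C_c^\infty((0,1))$, $\int_0^1 t^{\theta}|v'(t)|^2\,dt - \frac{(\theta-1)^2}{4}\int_0^1 t^{\theta-2}|v(t)|^2\,dt \ge \frac{1}{4}\int_0^1 t^{\theta-2}|\log t|^{-2}|v(t)|^2\,dt$. -/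
open MeasureTheory Set

noncomputable def cfun (θ : ℝ) (t : ℝ) : ℝ := -(θ - 1) / 2 + (2 * Real.log t)⁻¹

noncomputable def Ffun (θ : ℝ) (t : ℝ) : ℝ := t ^ (θ - 1) * cfun θ t

noncomputable def Fd (θ : ℝ) (t : ℝ) : ℝ :=
  (θ - 1) * t ^ (θ - 2) * cfun θ t - t ^ (θ - 2) * ((Real.log t) ^ 2)⁻¹ / 2

lemma hasDerivAt_Ffun (θ : ℝ) {t : ℝ} (ht : t ∈ Ioo (0 : ℝ) 1) :
    HasDerivAt (Ffun θ) (Fd θ t) t := by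
  have ht0 : (0 : ℝ) < t := ht.1
  have htne : t ≠ 0 := ne_of_gt ht0
  have hlog : Real.log t ≠ 0 := ne_of_lt (Real.log_neg ht0 ht.2)
  have h2log : 2 * Real.log t ≠ 0 := by simp [hlog]
  have hpow : HasDerivAt (fun x : ℝ => x ^ (θ - 1)) ((θ - 1) * t ^ (θ - 1 - 1)) t :=
    Real.hasDerivAt_rpow_const (Or.inl htne)
  have hlogd : HasDerivAt Real.log t⁻¹ t := Real.hasDerivAt_log htne
  have h2 : HasDerivAt (fun x : ℝ => 2 * Real.log x) (2 * t⁻¹) t := hlogd.const_mul 2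
  have hinv : HasDerivAt (fun x : ℝ => (2 * Real.log x)⁻¹)
      (-(2 * t⁻¹) / (2 * Real.log t) ^ 2) t := h2.inv h2log
  have hc : HasDerivAt (cfun θ) (-(2 * t⁻¹) / (2 * Real.log t) ^ 2) t := by
    unfold cfun
    exact hinv.const_add (-(θ - 1) / 2)
  have := hpow.mul hc
  refine this.congr_deriv ?_
  have h1 : t ^ (θ - 1 - 1) = t ^ (θ - 2) := by rw [show θ - 1 - 1 = θ - 2 by ring]
  have h2' : t ^ (θ - 1) = t ^ (θ - 2) * t := by
    rw [show θ - 1 = θ - 2 + 1 by ring, Real.rpow_add ht0, Real.rpow_one]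
  rw [Fd, h1, h2']
  field_simp
  ring

/-- Weighted Hardy–Leray inequality on (0,1) for the operator -div(t^θ ∇·). -/
theorem hardy_leray_weighted_interval (θ : ℝ) (v : ℝ → ℝ) (hv : ContDiff ℝ (⊤ : ℕ∞) v)
    (hcs : HasCompactSupport v) (hsupp : tsupport v ⊆ Ioo (0 : ℝ) 1) :
    (∫ t in Ioo (0 : ℝ) 1, t ^ θ * (deriv v t) ^ 2)
      - ((θ - 1) ^ 2 / 4) * ∫ t in Ioo (0 : ℝ) 1, t ^ (θ - 2) * (v t) ^ 2 ≥
      (1 / 4) * ∫ t in Ioo (0 : ℝ) 1,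
        t ^ (θ - 2) * ((Real.log t) ^ 2)⁻¹ * (v t) ^ 2 := by
  set K : Set ℝ := tsupport v with hK
  have hKc : IsCompact K := hcs
  have hKcl : IsClosed K := isClosed_tsupport v
  have hvc : Continuous v := hv.continuous
  have hdvc : Continuous (deriv v) := (hv.continuous_deriv (by simp))
  -- vanishing facts off K
  have hv0 : ∀ t ∉ K, v t = 0 := fun t ht => image_eq_zero_of_notMem_tsupport ht
  have hveq : ∀ t ∉ K, v =ᶠ[nhds t] 0 := by
    intro t ht
    filter_upwards [hKcl.isOpen_compl.mem_nhds ht] with x hx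
    exact hv0 x hx
  have hdv0 : ∀ t ∉ K, deriv v t = 0 := by
    intro t ht
    rw [(hveq t ht).deriv_eq]
    exact deriv_const t 0
  -- integrability helper
  have mkint : ∀ f : ℝ → ℝ, ContinuousOn f (Ioo 0 1) → (∀ t ∉ K, f t = 0) →
      Integrable f := by
    intro f hf h0
    have hcont : Continuous f := by
      rw [continuous_iff_continuousAt]
      intro t
      by_cases ht : t ∈ Ioo (0 : ℝ) 1
      · exact hf.continuousAt (isOpen_Ioo.mem_nhds ht)
      · have htK : t ∉ K := fun h => ht (hsupp h)
        have : f =ᶠ[nhds t] (fun _ => (0 : ℝ)) := by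
          filter_upwards [hKcl.isOpen_compl.mem_nhds htK] with x hx
          exact h0 x hx
        exact this.continuousAt
    exact hcont.integrable_of_hasCompactSupport (HasCompactSupport.intro hKc h0)
  -- the functions
  set sq : ℝ → ℝ := fun t => t ^ θ * (deriv v t - t⁻¹ * cfun θ t * v t) ^ 2 with hsq
  set g : ℝ → ℝ := fun t => Fd θ t * v t ^ 2 + Ffun θ t * (2 * v t * deriv v t) with hg
  set G : ℝ → ℝ := fun t => Ffun θ t * v t ^ 2 with hGdef
  have hg0 : ∀ t ∉ K, g t = 0 := by
    intro t ht; simp [hg, hv0 t ht]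
  have hG0 : ∀ t ∉ K, G t = 0 := by
    intro t ht; simp [hGdef, hv0 t ht]
  have hGderiv : ∀ t, HasDerivAt G (g t) t := by
    intro t
    by_cases ht : t ∈ Ioo (0 : ℝ) 1
    · have h1 : HasDerivAt (fun x => v x ^ 2) (2 * v t * deriv v t) t := by
        have hd := ((hv.differentiable (by simp)) t).hasDerivAt
        have h1 := hd.mul hd
        have heq : (fun x => v x ^ 2) = fun y => v y * v y := by ext y; ring
        rw [heq, show 2 * v t * deriv v t = deriv v t * v t + v t * deriv v t by ring]
        exact h1
      exact (hasDerivAt_Ffun θ ht).mul h1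
    · have htK : t ∉ K := fun h => ht (hsupp h)
      have hGz : G =ᶠ[nhds t] 0 := by
        filter_upwards [hKcl.isOpen_compl.mem_nhds htK] with x hx
        simp [hGdef, hv0 x hx]
      rw [show g t = 0 from hg0 t htK]
      exact (hasDerivAt_const t (0 : ℝ)).congr_of_eventuallyEq hGz
  -- continuous-on facts
  have hlogOn : ContinuousOn Real.log (Ioo (0:ℝ) 1) :=
    Real.continuousOn_log.mono (fun x hx => by simp [ne_of_gt hx.1])
  have hcOn : ContinuousOn (cfun θ) (Ioo 0 1) := by
    apply ContinuousOn.add continuousOn_const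
    apply ContinuousOn.inv₀ (continuousOn_const.mul hlogOn)
    intro x hx
    have : Real.log x ≠ 0 := ne_of_lt (Real.log_neg hx.1 hx.2)
    simp [this]
  have hrpow : ∀ p : ℝ, ContinuousOn (fun t : ℝ => t ^ p) (Ioo 0 1) := by
    intro p
    exact ContinuousOn.rpow_const continuousOn_id (fun x hx => Or.inl (ne_of_gt hx.1))
  have hlogsq : ContinuousOn (fun t : ℝ => ((Real.log t) ^ 2)⁻¹) (Ioo 0 1) := by
    apply ContinuousOn.inv₀
    · exact hlogOn.pow 2
    · intro x hx
      have : Real.log x ≠ 0 := ne_of_lt (Real.log_neg hx.1 hx.2)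
      positivity
  -- integrability of each piece
  have hint1 : Integrable (fun t : ℝ => t ^ θ * (deriv v t) ^ 2) := by
    apply mkint
    · exact (hrpow θ).mul (hdvc.continuousOn.pow 2)
    · intro t ht; simp [hdv0 t ht]
  have hint2 : Integrable (fun t : ℝ => t ^ (θ - 2) * (v t) ^ 2) := by
    apply mkint
    · exact (hrpow (θ - 2)).mul (hvc.continuousOn.pow 2)
    · intro t ht; simp [hv0 t ht]
  have hint3 : Integrable (fun t : ℝ => t ^ (θ - 2) * ((Real.log t) ^ 2)⁻¹ * (v t) ^ 2) := by
    apply mkint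
    · exact ((hrpow (θ - 2)).mul hlogsq).mul (hvc.continuousOn.pow 2)
    · intro t ht; simp [hv0 t ht]
  have hintsq : Integrable sq := by
    apply mkint
    · apply (hrpow θ).mul
      apply ContinuousOn.pow
      apply ContinuousOn.sub hdvc.continuousOn
      exact ((continuousOn_inv₀.mono (by intro x hx; exact ne_of_gt hx.1)).mul hcOn).mul
        hvc.continuousOn
    · intro t ht; simp [hsq, hv0 t ht, hdv0 t ht]
  have hintg : Integrable g := by
    apply mkint
    · apply ContinuousOn.add
      · apply ContinuousOn.mul _ (hvc.continuousOn.pow 2)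
        apply ContinuousOn.sub
        · exact (continuousOn_const.mul (hrpow (θ - 2))).mul hcOn
        · exact ((hrpow (θ - 2)).mul hlogsq).div_const 2
      · apply ContinuousOn.mul ((hrpow (θ - 1)).mul hcOn)
        exact (continuousOn_const.mul hvc.continuousOn).mul hdvc.continuousOn
    · exact hg0
  have hintG : Integrable G := by
    apply mkint
    · exact ((hrpow (θ - 1)).mul hcOn).mul (hvc.continuousOn.pow 2)
    · exact hG0
  -- integral of g is zero
  have hgzero : ∫ t in Ioo (0 : ℝ) 1, g t = 0 := by
    rw [setIntegral_eq_integral_of_forall_compl_eq_zero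
      (fun t ht => hg0 t (fun h => ht (hsupp h)))]
    exact integral_eq_zero_of_hasDerivAt_of_integrable hGderiv hintg hintG
  -- pointwise identity
  have key : ∀ t ∈ Ioo (0 : ℝ) 1,
      t ^ θ * (deriv v t) ^ 2 =
        ((θ - 1) ^ 2 / 4) * (t ^ (θ - 2) * (v t) ^ 2)
          + (1 / 4) * (t ^ (θ - 2) * ((Real.log t) ^ 2)⁻¹ * (v t) ^ 2) + sq t + g t := by
    intro t ht
    have ht0 : (0 : ℝ) < t := ht.1
    have htne : t ≠ 0 := ne_of_gt ht0
    have hlog : Real.log t ≠ 0 := ne_of_lt (Real.log_neg ht0 ht.2)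
    have h1 : t ^ (θ - 1) = t ^ (θ - 2) * t := by
      rw [show θ - 1 = θ - 2 + 1 by ring, Real.rpow_add ht0, Real.rpow_one]
    have h2 : t ^ θ = t ^ (θ - 2) * t * t := by
      conv_lhs => rw [show θ = θ - 2 + 1 + 1 by ring]
      rw [Real.rpow_add ht0, Real.rpow_add ht0, Real.rpow_one]
    simp only [hsq, hg, Fd, Ffun, cfun, h1, h2]
    field_simp
    ring
  -- assemble
  have hsum : ∫ t in Ioo (0 : ℝ) 1, t ^ θ * (deriv v t) ^ 2 =
      ((θ - 1) ^ 2 / 4) * (∫ t in Ioo (0 : ℝ) 1, t ^ (θ - 2) * (v t) ^ 2)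
        + (1 / 4) * (∫ t in Ioo (0 : ℝ) 1, t ^ (θ - 2) * ((Real.log t) ^ 2)⁻¹ * (v t) ^ 2)
        + (∫ t in Ioo (0 : ℝ) 1, sq t) + ∫ t in Ioo (0 : ℝ) 1, g t := by
    have ha2 : IntegrableOn (fun x : ℝ => (θ - 1) ^ 2 / 4 * (x ^ (θ - 2) * v x ^ 2))
        (Ioo 0 1) volume := hint2.integrableOn.const_mul _
    have ha3 : IntegrableOn
        (fun x : ℝ => 1 / 4 * (x ^ (θ - 2) * ((Real.log x) ^ 2)⁻¹ * v x ^ 2))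
        (Ioo 0 1) volume := hint3.integrableOn.const_mul _
    have hA : IntegrableOn (fun x : ℝ => (θ - 1) ^ 2 / 4 * (x ^ (θ - 2) * v x ^ 2)
        + 1 / 4 * (x ^ (θ - 2) * ((Real.log x) ^ 2)⁻¹ * v x ^ 2)) (Ioo 0 1) volume := ha2.add ha3
    have hB : IntegrableOn (fun x : ℝ => (θ - 1) ^ 2 / 4 * (x ^ (θ - 2) * v x ^ 2)
        + 1 / 4 * (x ^ (θ - 2) * ((Real.log x) ^ 2)⁻¹ * v x ^ 2) + sq x) (Ioo 0 1) volume :=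
      hA.add hintsq.integrableOn
    rw [setIntegral_congr_fun measurableSet_Ioo key]
    rw [integral_add hB hintg.integrableOn, integral_add hA hintsq.integrableOn,
      integral_add ha2 ha3, integral_const_mul, integral_const_mul]
  have hsqnn : (0 : ℝ) ≤ ∫ t in Ioo (0 : ℝ) 1, sq t := by
    apply setIntegral_nonneg measurableSet_Ioo
    intro t ht
    have := Real.rpow_nonneg (le_of_lt ht.1) θ
    positivity
  rw [ge_iff_le, hsum, hgzero]
  linarith
end

section
/- Let $a > 0$, $f \in L^2((a,\infty); s^2\,ds)$, and let $v \in C^2((0,\infty)) \cap L^2((a,\infty); s^{-2}\,ds)$ satisfy $v(a) = 0$ and $-v'' \le f$ pointwise on $(a,\infty)$. Then the positive part $v^+ = \max\{v,0\}$ satisfies $(v^+)' \in L^2((a,\infty))$ and $\int_a^\infty |(v^+)'(s)|^2\,ds \le \int_a^\infty f(s)\,v^+(s)\,ds$. -/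
open MeasureTheory Set Filter Asymptotics

lemma posPart_hasDerivWithinAt {v : ℝ → ℝ} {d x : ℝ} (hd : HasDerivAt v d x) :
    HasDerivWithinAt (fun y => max (v y) 0)
      (if 0 < v x then d else if v x = 0 then max d 0 else 0) (Ici x) x := by
  rcases lt_trichotomy (v x) 0 with hneg | hzero | hpos
  · rw [if_neg (by linarith), if_neg hneg.ne]
    have hev : (fun y => max (v y) 0) =ᶠ[nhds x] fun _ => (0 : ℝ) := by
      filter_upwards [hd.continuousAt.eventually (eventually_lt_nhds hneg)] with y hy
      exact max_eq_right hy.le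
    exact ((hasDerivAt_const x (0 : ℝ)).congr_of_eventuallyEq hev).hasDerivWithinAt
  · rw [if_neg (by rw [hzero]; exact lt_irrefl 0), if_pos hzero]
    rw [hasDerivWithinAt_iff_isLittleO]
    have h1 : (fun y => v y - v x - (y - x) • d) =o[nhdsWithin x (Ici x)] fun y => y - x :=
      (hasDerivAt_iff_isLittleO.1 hd).mono nhdsWithin_le_nhds
    refine IsBigO.trans_isLittleO ?_ h1
    rw [isBigO_iff]
    refine ⟨1, ?_⟩
    filter_upwards [self_mem_nhdsWithin] with y (hy : x ≤ y)
    have h2 : (y - x) • max d 0 = max ((y - x) • d) 0 := by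
      simp only [smul_eq_mul]
      rw [mul_max_of_nonneg _ _ (by linarith : (0:ℝ) ≤ y - x), mul_zero]
    rw [one_mul, hzero, h2]
    simp only [Real.norm_eq_abs, max_self, sub_zero, smul_eq_mul]
    simpa [sub_zero] using abs_max_sub_max_le_abs (v y) ((y-x)*d) 0
  · rw [if_pos hpos]
    have hev : (fun y => max (v y) 0) =ᶠ[nhds x] v := by
      filter_upwards [hd.continuousAt.eventually (eventually_gt_nhds hpos)] with y hy
      exact max_eq_left hy.le
    exact (hd.congr_of_eventuallyEq hev).hasDerivWithinAt

/-- If `v ∈ C²((0,∞)) ∩ L²((a,∞); s⁻² ds)` vanishes at `a` and `-v'' ≤ f` on `(a,∞)`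
with `f ∈ L²((a,∞); s² ds)`, then the positive part `v⁺` has a weak derivative in
`L²((a,∞))` and `∫ |(v⁺)'|² ≤ ∫ f v⁺`. -/
theorem positive_part_energy_estimate (a : ℝ) (ha : 0 < a) (f v : ℝ → ℝ)
    (hf : Integrable (fun s => s ^ 2 * (f s) ^ 2) (volume.restrict (Ioi a)))
    (hfm : AEStronglyMeasurable f (volume.restrict (Ioi a)))
    (hv : ContDiffOn ℝ 2 v (Ioi (0 : ℝ)))
    (hvL2 : Integrable (fun s => (s ^ 2)⁻¹ * (v s) ^ 2) (volume.restrict (Ioi a)))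
    (hva : v a = 0)
    (hineq : ∀ s ∈ Ioi a, -(deriv (deriv v) s) ≤ f s) :
    ∃ g : ℝ → ℝ,
      Integrable (fun s => (g s) ^ 2) (volume.restrict (Ioi a)) ∧
      (∀ φ : ℝ → ℝ, ContDiff ℝ (⊤ : ℕ∞) φ → HasCompactSupport φ → tsupport φ ⊆ Ioi a →
        ∫ s in Ioi a, max (v s) 0 * deriv φ s = -∫ s in Ioi a, g s * φ s) ∧
      ∫ s in Ioi a, (g s) ^ 2 ≤ ∫ s in Ioi a, f s * max (v s) 0 := by
  classical
  set vp : ℝ → ℝ := fun s => max (v s) 0 with hvpdef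
  set g : ℝ → ℝ := fun s =>
    if 0 < v s then deriv v s else if v s = 0 then max (deriv v s) 0 else 0 with hgdef
  -- smoothness facts
  have hvdiff : DifferentiableOn ℝ v (Ioi (0:ℝ)) := hv.differentiableOn (by norm_num)
  have hvd : ∀ x ∈ Ioi (0:ℝ), HasDerivAt v (deriv v x) x := by
    intro x hx
    exact ((hvdiff x hx).differentiableAt (isOpen_Ioi.mem_nhds hx)).hasDerivAt
  have hDcd : ContDiffOn ℝ 1 (deriv v) (Ioi (0:ℝ)) :=
    hv.deriv_of_isOpen isOpen_Ioi (by norm_num)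
  have hDd : ∀ x ∈ Ioi (0:ℝ), HasDerivAt (deriv v) (deriv (deriv v) x) x := by
    intro x hx
    exact (((hDcd.differentiableOn one_ne_zero) x hx).differentiableAt
      (isOpen_Ioi.mem_nhds hx)).hasDerivAt
  have hvc : ContinuousOn v (Ioi (0:ℝ)) := hv.continuousOn
  have hDc : ContinuousOn (deriv v) (Ioi (0:ℝ)) := hDcd.continuousOn
  have hD2c : ContinuousOn (deriv (deriv v)) (Ioi (0:ℝ)) :=
    hDcd.continuousOn_deriv_of_isOpen isOpen_Ioi (le_refl 1)
  have hvpc : ContinuousOn vp (Ioi (0:ℝ)) := fun x hx => (hvc x hx).max continuousWithinAt_const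
  -- pointwise facts about g
  have hg_abs : ∀ x, |g x| ≤ |deriv v x| := by
    intro x
    simp only [hgdef]
    split_ifs with h1 h2
    · exact le_refl _
    · rcases le_or_gt (deriv v x) 0 with h | h
      · simp [max_eq_right h]
      · simp [max_eq_left h.le, le_abs_self, abs_of_pos h]
    · simp [abs_nonneg]
  have hg_sq : ∀ x, g x * deriv v x = g x ^ 2 := by
    intro x
    simp only [hgdef]
    split_ifs with h1 h2
    · ring
    · rcases le_or_gt (deriv v x) 0 with h | h
      · simp [max_eq_right h]
      · rw [max_eq_left h.le]; ring
    · ring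
  have hgd : ∀ x ∈ Ioi (0:ℝ), HasDerivWithinAt vp (g x) (Ici x) x := by
    intro x hx
    exact posPart_hasDerivWithinAt (hvd x hx)
  -- measurability of g
  have hvca : ContinuousOn v (Ioi a) := hvc.mono (Ioi_subset_Ioi ha.le)
  have hg_meas : AEStronglyMeasurable g (volume.restrict (Ioi a)) := by
    have hSopen : IsOpen (Ioi a ∩ v ⁻¹' (Ioi 0)) :=
      hvca.isOpen_inter_preimage isOpen_Ioi isOpen_Ioi
    have hS'open : IsOpen (Ioi a ∩ v ⁻¹' (Iio 0)) :=
      hvca.isOpen_inter_preimage isOpen_Ioi isOpen_Iio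
    have hT : MeasurableSet (Ioi a ∩ v ⁻¹' {0}) := by
      have hTe : Ioi a ∩ v ⁻¹' {0} =
          Ioi a \ ((Ioi a ∩ v ⁻¹' (Ioi 0)) ∪ (Ioi a ∩ v ⁻¹' (Iio 0))) := by
        ext x
        simp only [mem_inter_iff, mem_preimage, mem_singleton_iff, mem_diff, mem_union,
          mem_Ioi, mem_Iio]
        constructor
        · rintro ⟨hx1, hx2⟩
          exact ⟨hx1, by rw [hx2]; rintro (⟨_, h⟩ | ⟨_, h⟩) <;> exact lt_irrefl 0 h⟩
        · rintro ⟨hx1, hx2⟩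
          push_neg at hx2
          obtain ⟨h1, h2⟩ := hx2
          exact ⟨hx1, le_antisymm (h1 hx1) (h2 hx1)⟩
      rw [hTe]
      exact measurableSet_Ioi.diff (hSopen.union hS'open).measurableSet
    have hDm : AEStronglyMeasurable (deriv v) (volume.restrict (Ioi a)) :=
      (hDc.mono (Ioi_subset_Ioi ha.le)).aestronglyMeasurable measurableSet_Ioi
    have hG : AEStronglyMeasurable (fun x =>
        (Ioi a ∩ v ⁻¹' (Ioi 0)).indicator (deriv v) x +
        (Ioi a ∩ v ⁻¹' {0}).indicator (fun y => max (deriv v y) 0) x)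
        (volume.restrict (Ioi a)) := by
      refine (hDm.indicator hSopen.measurableSet).add ?_
      exact ((hDm.sup aestronglyMeasurable_const).indicator hT)
    refine hG.congr ?_
    filter_upwards [ae_restrict_mem measurableSet_Ioi] with x hx
    rcases lt_trichotomy (v x) 0 with h | h | h
    · have h1 : x ∉ Ioi a ∩ v ⁻¹' (Ioi 0) := by
        simp only [mem_inter_iff, mem_preimage, mem_Ioi]; rintro ⟨_, h2⟩; linarith
      have h2 : x ∉ Ioi a ∩ v ⁻¹' {0} := by
        simp only [mem_inter_iff, mem_preimage, mem_singleton_iff]; rintro ⟨_, h2⟩; linarith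
      simp only [indicator_of_notMem h1, indicator_of_notMem h2, hgdef]
      rw [if_neg (by linarith), if_neg h.ne]
      norm_num
    · have h1 : x ∉ Ioi a ∩ v ⁻¹' (Ioi 0) := by
        simp only [mem_inter_iff, mem_preimage, mem_Ioi]; rintro ⟨_, h2⟩; linarith
      have h2 : x ∈ Ioi a ∩ v ⁻¹' {0} := ⟨hx, h⟩
      simp only [indicator_of_notMem h1, indicator_of_mem h2, hgdef]
      rw [if_neg (by rw [h]; exact lt_irrefl 0), if_pos h]
      norm_num
    · have h1 : x ∈ Ioi a ∩ v ⁻¹' (Ioi 0) := ⟨hx, h⟩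
      have h2 : x ∉ Ioi a ∩ v ⁻¹' {0} := by
        simp only [mem_inter_iff, mem_preimage, mem_singleton_iff]; rintro ⟨_, h2⟩; linarith
      simp only [indicator_of_mem h1, indicator_of_notMem h2, hgdef]
      rw [if_pos h]
      norm_num
  -- integrability of f * vp on (a, ∞)
  have hvpm : AEStronglyMeasurable vp (volume.restrict (Ioi a)) :=
    (hvpc.mono (Ioi_subset_Ioi ha.le)).aestronglyMeasurable measurableSet_Ioi
  have hfvp : Integrable (fun s => f s * vp s) (volume.restrict (Ioi a)) := by
    refine (hf.add hvL2).mono' (hfm.mul hvpm) ?_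
    filter_upwards [ae_restrict_mem measurableSet_Ioi] with s hs
    simp only [Pi.add_apply]
    have hs0 : 0 < s := lt_trans ha hs
    have h1 : |vp s| ≤ |v s| := by
      rcases le_or_gt (v s) 0 with h | h
      · simp only [hvpdef]; rw [max_eq_right h]; simp [abs_nonneg]
      · simp only [hvpdef]; rw [max_eq_left h.le]
    have h2 : ‖f s * vp s‖ ≤ |f s| * |v s| := by
      rw [Real.norm_eq_abs, abs_mul]
      exact mul_le_mul_of_nonneg_left h1 (abs_nonneg _)
    refine h2.trans ?_
    have e1 : |f s| * |v s| = (s * |f s|) * (|v s| / s) := by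
      field_simp
    have hA : (s * |f s|) * (|v s| / s) ≤ ((s * |f s|)^2 + (|v s| / s)^2)/2 := by
      nlinarith [sq_nonneg (s * |f s| - |v s| / s)]
    have e2 : (s * |f s|)^2 = s^2 * f s ^2 := by rw [mul_pow, sq_abs]
    have e3 : (|v s| / s)^2 = (s^2)⁻¹ * v s ^2 := by
      rw [div_pow, sq_abs, div_eq_inv_mul]
    have hnn1 : 0 ≤ s^2 * f s ^2 := by positivity
    have hnn2 : 0 ≤ (s^2)⁻¹ * v s ^2 := by positivity
    rw [e1]
    refine hA.trans ?_
    rw [e2, e3]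
    linarith
  set M : ℝ := ∫ s in Ioi a, |f s * vp s| with hMdef
  have hIocM : ∀ b : ℝ, a < b → ∫ s in Ioc a b, f s * vp s ≤ M := by
    intro b hb
    have hI : IntegrableOn (fun s => f s * vp s) (Ioc a b) :=
      hfvp.mono_measure (Measure.restrict_mono Ioc_subset_Ioi_self le_rfl)
    calc ∫ s in Ioc a b, f s * vp s ≤ ∫ s in Ioc a b, |f s * vp s| :=
          integral_mono hI hI.abs (fun s => le_abs_self _)
      _ ≤ M := setIntegral_mono_set hfvp.abs
          (Eventually.of_forall fun x => abs_nonneg _)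
          (Ioc_subset_Ioi_self).eventuallyLE
  -- integrability of pieces on compact intervals
  have hg2_meas : AEStronglyMeasurable (fun s => g s ^ 2) (volume.restrict (Ioi a)) := by
    refine (hg_meas.mul hg_meas).congr (Eventually.of_forall fun s => ?_)
    simp [pow_two]
  have hgi : ∀ b : ℝ, a < b → IntegrableOn (fun s => g s ^ 2) (Ioc a b) := by
    intro b hb
    have hsub : Icc a b ⊆ Ioi (0:ℝ) := fun x hx => lt_of_lt_of_le ha hx.1
    have hDint : IntegrableOn (fun s => (deriv v s)^2) (Ioc a b) :=
      (((hDc.mono hsub).pow 2).integrableOn_Icc).mono_set Ioc_subset_Icc_self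
    refine hDint.mono' (hg2_meas.mono_measure
      (Measure.restrict_mono Ioc_subset_Ioi_self le_rfl)) ?_
    refine Eventually.of_forall fun s => ?_
    rw [Real.norm_eq_abs, abs_of_nonneg (sq_nonneg _), ← sq_abs (g s), ← sq_abs (deriv v s)]
    exact pow_le_pow_left₀ (abs_nonneg _) (hg_abs s) 2
  -- energy estimate on compact intervals
  have key : ∀ b : ℝ, a < b →
      ∫ s in Ioc a b, g s ^ 2 ≤ vp b * deriv v b + ∫ s in Ioc a b, f s * vp s := by
    intro b hb
    have hsub : Icc a b ⊆ Ioi (0:ℝ) := fun x hx => lt_of_lt_of_le ha hx.1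
    have hvpD2i : IntegrableOn (fun s => vp s * deriv (deriv v) s) (Ioc a b) :=
      (((hvpc.mono hsub).mul (hD2c.mono hsub)).integrableOn_Icc).mono_set Ioc_subset_Icc_self
    have hg2ii : IntervalIntegrable (fun s => g s ^ 2) volume a b :=
      (intervalIntegrable_iff_integrableOn_Ioc_of_le hb.le).2 (hgi b hb)
    have hvpD2ii : IntervalIntegrable (fun s => vp s * deriv (deriv v) s) volume a b :=
      (intervalIntegrable_iff_integrableOn_Ioc_of_le hb.le).2 hvpD2i
    have hftc : ∫ x in a..b, (g x ^ 2 + vp x * deriv (deriv v) x) =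
        vp b * deriv v b - vp a * deriv v a := by
      apply intervalIntegral.integral_eq_sub_of_hasDeriv_right_of_le hb.le
      · exact (hvpc.mono hsub).mul (hDc.mono hsub)
      · intro x hx
        have hx0 : x ∈ Ioi (0:ℝ) := hsub (Ioo_subset_Icc_self hx)
        have h1 : HasDerivWithinAt (fun y => vp y * deriv v y)
            (g x * deriv v x + vp x * deriv (deriv v) x) (Ioi x) x :=
          ((hgd x hx0).mono Ioi_subset_Ici_self).mul ((hDd x hx0).hasDerivWithinAt)
        rwa [hg_sq x] at h1
      · exact hg2ii.add hvpD2ii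
    have hvpa : vp a = 0 := by simp only [hvpdef]; rw [hva]; exact max_self 0
    rw [intervalIntegral.integral_add hg2ii hvpD2ii, hvpa, zero_mul, sub_zero,
      intervalIntegral.integral_of_le hb.le, intervalIntegral.integral_of_le hb.le] at hftc
    have hmono : ∫ s in Ioc a b, (-(vp s * deriv (deriv v) s)) ≤ ∫ s in Ioc a b, f s * vp s := by
      refine setIntegral_mono_on hvpD2i.neg
        (hfvp.mono_measure (Measure.restrict_mono Ioc_subset_Ioi_self le_rfl))
        measurableSet_Ioc ?_
      intro x hx
      have hxa : x ∈ Ioi a := hx.1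
      have h2 := hineq x hxa
      have hvpnn : (0:ℝ) ≤ vp x := le_max_right _ _
      calc -(vp x * deriv (deriv v) x) = vp x * (-(deriv (deriv v) x)) := by ring
        _ ≤ vp x * f x := mul_le_mul_of_nonneg_left h2 hvpnn
        _ = f x * vp x := mul_comm _ _
    have hneg : ∫ s in Ioc a b, (-(vp s * deriv (deriv v) s)) =
        -∫ s in Ioc a b, vp s * deriv (deriv v) s := integral_neg _
    linarith
  -- boundary term control
  have hbd : ∀ ε : ℝ, 0 < ε → ∀ B : ℝ, ∃ b, B ≤ b ∧ a < b ∧ vp b * deriv v b < ε := by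
    intro ε hε B
    by_contra hcon
    push_neg at hcon
    set B' := max B (a+1) with hB'def
    have hB'a : a < B' := lt_of_lt_of_le (by linarith) (le_max_right _ _)
    have hB'0 : 0 < B' := lt_trans ha hB'a
    have hlb : ∀ s, B' ≤ s → ε ≤ v s * deriv v s := by
      intro s hs
      have h := hcon s (le_trans (le_max_left _ _) hs) (lt_of_lt_of_le hB'a hs)
      have hvpos : 0 < v s := by
        by_contra h'
        push_neg at h'
        have : vp s = 0 := by simp only [hvpdef]; exact max_eq_right h'
        rw [this, zero_mul] at h
        linarith
      have hvps : vp s = v s := max_eq_left hvpos.le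
      rwa [hvps] at h
    have hmon : MonotoneOn (fun s => v s ^ 2 - 2*ε*s) (Ici B') := by
      have hsub2 : Ici B' ⊆ Ioi (0:ℝ) := fun x hx => lt_of_lt_of_le hB'0 hx
      apply monotoneOn_of_deriv_nonneg (convex_Ici B')
      · exact ((hvc.mono hsub2).pow 2).sub (continuous_const.mul continuous_id).continuousOn
      · intro x hx
        rw [interior_Ici] at hx
        have hx0 : x ∈ Ioi (0:ℝ) := lt_trans hB'0 hx
        exact (((hvd x hx0).pow 2).sub
          ((hasDerivAt_id x).const_mul (2*ε))).differentiableAt.differentiableWithinAt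
      · intro x hx
        rw [interior_Ici] at hx
        have hx0 : x ∈ Ioi (0:ℝ) := lt_trans hB'0 hx
        have hdx : HasDerivAt (fun s => v s ^ 2 - 2*ε*s)
            ((2:ℕ) * v x ^ 1 * deriv v x - 2*ε*1) x :=
          ((hvd x hx0).pow 2).sub ((hasDerivAt_id x).const_mul (2*ε))
        rw [hdx.deriv]
        have := hlb x hx.le
        simp only [Nat.cast_ofNat, pow_one, mul_one]
        nlinarith
    have hgrow : ∀ s, B' ≤ s → 2*ε*(s - B') ≤ v s ^ 2 := by
      intro s hs
      have h := hmon self_mem_Ici hs hs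
      simp only at h
      nlinarith [sq_nonneg (v B')]
    have hint : IntegrableOn (fun s => ε * s⁻¹) (Ioi (2*B')) := by
      have h0 : IntegrableOn (fun s => (s^2)⁻¹ * v s ^ 2) (Ioi (2*B')) :=
        hvL2.mono_measure (Measure.restrict_mono (Ioi_subset_Ioi (by linarith)) le_rfl)
      refine h0.mono' ((measurable_const.mul measurable_inv).aestronglyMeasurable) ?_
      filter_upwards [ae_restrict_mem measurableSet_Ioi] with s hs
      have hs2B : 2*B' < s := hs
      have hs0 : 0 < s := by linarith
      have h1 : ε * s ≤ v s ^ 2 := by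
        have h2 := hgrow s (by linarith)
        nlinarith
      have h3 : (s^2)⁻¹ * (ε * s) = ε * s⁻¹ := by field_simp
      rw [Real.norm_eq_abs, abs_of_nonneg (by positivity : (0:ℝ) ≤ ε * s⁻¹), ← h3]
      exact mul_le_mul_of_nonneg_left h1 (by positivity)
    have hinv : IntegrableOn (fun s : ℝ => s⁻¹) (Ioi (2*B')) := by
      have := (integrable_const_mul_iff (isUnit_iff_ne_zero.2 hε.ne') (fun s : ℝ => s⁻¹)).1 hint
      exact this
    exact not_IntegrableOn_Ioi_inv hinv
  -- choose a sequence
  have hbseq : ∃ b : ℕ → ℝ, (∀ n : ℕ, (n:ℝ) ≤ b n) ∧ (∀ n : ℕ, a < b n) ∧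
      (∀ n : ℕ, vp (b n) * deriv v (b n) < 1/(n+1)) := by
    have h := fun n : ℕ => hbd (1/((n:ℝ)+1)) (one_div_pos.mpr (by positivity)) (n:ℝ)
    choose b h1 h2 h3 using h
    exact ⟨b, h1, h2, h3⟩
  obtain ⟨b, hb1, hb2, hb3⟩ := hbseq
  have hbtop : Tendsto b atTop atTop :=
    tendsto_atTop_mono hb1 tendsto_natCast_atTop_atTop
  -- integrability of g² on (a, ∞)
  have hgL2 : IntegrableOn (fun s => g s ^ 2) (Ioi a) := by
    apply integrableOn_Ioi_of_intervalIntegral_norm_bounded (1 + M) a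
      (fun n => hgi (b n) (hb2 n)) hbtop
    filter_upwards with n
    rw [intervalIntegral.integral_of_le (hb2 n).le]
    have : ∀ s, ‖g s ^ 2‖ = g s ^ 2 := fun s => by
      rw [Real.norm_eq_abs, abs_of_nonneg (sq_nonneg _)]
    simp only [this]
    calc ∫ s in Ioc a (b n), g s ^ 2
        ≤ vp (b n) * deriv v (b n) + ∫ s in Ioc a (b n), f s * vp s := key (b n) (hb2 n)
      _ ≤ 1 + M := by
          have h1 := (hb3 n).le.trans (by
            rw [div_le_one (by positivity)]; linarith [Nat.cast_nonneg (α := ℝ) n] : (1:ℝ)/(n+1) ≤ 1)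
          exact add_le_add h1 (hIocM (b n) (hb2 n))
  -- the final inequality
  have hfinal : ∫ s in Ioi a, g s ^ 2 ≤ ∫ s in Ioi a, f s * vp s := by
    have t1 : Tendsto (fun n => ∫ s in Ioc a (b n), g s ^ 2) atTop
        (nhds (∫ s in Ioi a, g s ^ 2)) := by
      have := intervalIntegral_tendsto_integral_Ioi a hgL2 hbtop
      refine this.congr fun n => ?_
      rw [intervalIntegral.integral_of_le (hb2 n).le]
    have t2 : Tendsto (fun n : ℕ => 1/((n:ℝ)+1) + ∫ s in Ioc a (b n), f s * vp s)
        atTop (nhds (0 + ∫ s in Ioi a, f s * vp s)) := by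
      refine Tendsto.add tendsto_one_div_add_atTop_nhds_zero_nat ?_
      have := intervalIntegral_tendsto_integral_Ioi a hfvp hbtop
      refine this.congr fun n => ?_
      rw [intervalIntegral.integral_of_le (hb2 n).le]
    rw [zero_add] at t2
    refine le_of_tendsto_of_tendsto' t1 t2 fun n => ?_
    calc ∫ s in Ioc a (b n), g s ^ 2
        ≤ vp (b n) * deriv v (b n) + ∫ s in Ioc a (b n), f s * vp s := key (b n) (hb2 n)
      _ ≤ 1/((n:ℝ)+1) + ∫ s in Ioc a (b n), f s * vp s :=
          add_le_add (hb3 n).le (le_refl _)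
  -- weak derivative property
  have hweak : ∀ φ : ℝ → ℝ, ContDiff ℝ (⊤ : ℕ∞) φ → HasCompactSupport φ → tsupport φ ⊆ Ioi a →
      ∫ s in Ioi a, vp s * deriv φ s = -∫ s in Ioi a, g s * φ s := by
    intro φ hφ hφc hφs
    have hφcont : Continuous φ := hφ.continuous
    have hdφcont : Continuous (deriv φ) := hφ.continuous_deriv (by simp)
    by_cases hK : tsupport φ = ∅
    · have hφ0 : ∀ x, φ x = 0 := fun x =>
        image_eq_zero_of_notMem_tsupport (by rw [hK]; exact notMem_empty x)
      have hdφ0 : ∀ x : ℝ, deriv φ x = 0 := by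
        intro x
        by_contra h
        have hmem : x ∈ tsupport φ := support_deriv_subset h
        rw [hK] at hmem
        exact notMem_empty x hmem
      simp only [hdφ0, hφ0, mul_zero, integral_zero, neg_zero]
    · have hKne : (tsupport φ).Nonempty := nonempty_iff_ne_empty.2 hK
      have hKcp : IsCompact (tsupport φ) := hφc
      set c := sInf (tsupport φ) with hcdef
      set d := sSup (tsupport φ) with hddef
      have hcK : c ∈ tsupport φ := hKcp.sInf_mem hKne
      have hca : a < c := hφs hcK
      have hsupIcc : tsupport φ ⊆ Icc c d := fun x hx =>
        ⟨csInf_le hKcp.bddBelow hx, le_csSup hKcp.bddAbove hx⟩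
      have hcd : c ≤ d := (hsupIcc hcK).2
      set c' := (a + c)/2 with hc'def
      set d' := d + 1 with hd'def
      have hac' : a < c' := by rw [hc'def]; linarith
      have hc'c : c' < c := by rw [hc'def]; linarith
      have hc'0 : (0:ℝ) < c' := lt_trans ha hac'
      have hc'd' : c' ≤ d' := by rw [hc'def, hd'def]; linarith
      have hφ0 : ∀ x, x ∉ Icc c d → φ x = 0 := fun x hx =>
        image_eq_zero_of_notMem_tsupport (fun h => hx (hsupIcc h))
      have hdφ0 : ∀ x, x ∉ Icc c d → deriv φ x = 0 := by
        intro x hx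
        by_contra h
        exact hx (hsupIcc (support_deriv_subset h))
      have hIocsub : Ioc c' d' ⊆ Ioi a := fun x hx => lt_trans hac' hx.1
      have hnotIcc : ∀ x : ℝ, x ∈ Ioi a → x ∉ Ioc c' d' → x ∉ Icc c d := by
        intro x _ hx2
        simp only [mem_Ioc, not_and_or, not_lt, not_le] at hx2
        rcases hx2 with h | h
        · intro hmem; have := hmem.1; linarith
        · intro hmem; have := hmem.2; rw [hd'def] at h; linarith
      have e1 : ∫ s in Ioi a, vp s * deriv φ s = ∫ s in Ioc c' d', vp s * deriv φ s := by
        refine setIntegral_eq_of_subset_of_forall_diff_eq_zero measurableSet_Ioi hIocsub ?_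
        intro x hx
        rw [hdφ0 x (hnotIcc x hx.1 hx.2), mul_zero]
      have e2 : ∫ s in Ioi a, g s * φ s = ∫ s in Ioc c' d', g s * φ s := by
        refine setIntegral_eq_of_subset_of_forall_diff_eq_zero measurableSet_Ioi hIocsub ?_
        intro x hx
        rw [hφ0 x (hnotIcc x hx.1 hx.2), mul_zero]
      have hsubIcc : Icc c' d' ⊆ Ioi (0:ℝ) := fun x hx => lt_of_lt_of_le hc'0 hx.1
      have hgφi : IntegrableOn (fun x => g x * φ x) (Ioc c' d') := by
        have hdom : IntegrableOn (fun x => |deriv v x| * |φ x|) (Ioc c' d') :=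
          (((hDc.mono hsubIcc).abs.mul hφcont.abs.continuousOn).integrableOn_Icc).mono_set
            Ioc_subset_Icc_self
        refine hdom.mono' (((hg_meas.mono_measure
          (Measure.restrict_mono hIocsub le_rfl)).mul hφcont.aestronglyMeasurable)) ?_
        refine Eventually.of_forall fun x => ?_
        rw [Real.norm_eq_abs, abs_mul]
        exact mul_le_mul_of_nonneg_right (hg_abs x) (abs_nonneg _)
      have hvpdφi : IntegrableOn (fun x => vp x * deriv φ x) (Ioc c' d') :=
        (((hvpc.mono hsubIcc).mul hdφcont.continuousOn).integrableOn_Icc).mono_set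
          Ioc_subset_Icc_self
      have hgφii : IntervalIntegrable (fun x => g x * φ x) volume c' d' :=
        (intervalIntegrable_iff_integrableOn_Ioc_of_le hc'd').2 hgφi
      have hvpdφii : IntervalIntegrable (fun x => vp x * deriv φ x) volume c' d' :=
        (intervalIntegrable_iff_integrableOn_Ioc_of_le hc'd').2 hvpdφi
      have hftc : ∫ x in c'..d', (g x * φ x + vp x * deriv φ x) =
          vp d' * φ d' - vp c' * φ c' := by
        have h := intervalIntegral.integral_eq_sub_of_hasDeriv_right_of_le
          (f := fun y => vp y * φ y) (f' := fun x => g x * φ x + vp x * deriv φ x)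
          hc'd' ((hvpc.mono hsubIcc).mul hφcont.continuousOn)
          (fun x hx => ((hgd x (hsubIcc (Ioo_subset_Icc_self hx))).mono Ioi_subset_Ici_self).mul
            (((hφ.differentiable (by simp)).differentiableAt).hasDerivAt.hasDerivWithinAt))
          (hgφii.add hvpdφii)
        simpa using h
      have hφc' : φ c' = 0 := hφ0 c' (fun hmem => absurd hmem.1 (not_le.2 hc'c))
      have hφd' : φ d' = 0 := hφ0 d' (fun hmem => absurd hmem.2 (not_le.2 (by rw [hd'def]; linarith)))
      rw [hφc', hφd', mul_zero, mul_zero, sub_zero] at hftc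
      rw [intervalIntegral.integral_add hgφii hvpdφii, intervalIntegral.integral_of_le hc'd',
        intervalIntegral.integral_of_le hc'd'] at hftc
      rw [e1, e2]
      linarith
  exact ⟨g, hgL2, hweak, hfinal⟩
end

section
/- Fix $\alpha \le 1/4$ and set $\delta_\alpha = (\sqrt{1-4\alpha}-1)/2$. The function $u_\alpha(t) = t^{1/2}|\log t|^{-\delta_\alpha}$ on $(0,1)$ satisfies $-u_\alpha''(t) - \frac{1}{4}t^{-2}u_\alpha(t) = \alpha t^{-2}|\log t|^{-2} u_\alpha(t)$ for every $t \in (0,1)$. Moreover, for any $\gamma \le 1$ and $R \in (0,1)$, $u_\alpha \in L^2((0,R); t^{-2}|\log t|^{-2\gamma}\,dt)$ if and only if $\alpha < \frac{1}{4} - (1-\gamma)^2$. -/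
/-!
With `L = -log t`, the logarithmic derivative of `u = t^{1/2} L^{-δ}` is `(1/2 + δ/L)/t`,
which gives `u''/u = (δ(δ+1)/L² - 1/4)/t²`; the choice of `δ` is exactly `δ(δ+1) = -α`.
The weighted integrand is `t⁻¹ L^{-2(γ+δ)}`, and the substitution `t = e^{-x}` turns it
into `x^{-2(γ+δ)}` on `(-log R, ∞)`, integrable iff `2(γ+δ) > 1`, i.e.
`√(1-4α) > 2(1-γ) ≥ 0`.
-/

open MeasureTheory Set Real

lemma hasDerivAt_rpow_mul_neg_log_rpow (p q : ℝ) {x : ℝ} (hx : 0 < x) (hx1 : x ≠ 1) :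
    HasDerivAt (fun y => y ^ p * (-log y) ^ q)
      (x ^ p * (-log x) ^ q * ((p - q / -log x) / x)) x := by
  have hL : -log x ≠ 0 := neg_ne_zero.2 (log_ne_zero_of_pos_of_ne_one hx hx1)
  refine ((hasDerivAt_rpow_const (Or.inl hx.ne')).mul
    ((hasDerivAt_log hx.ne').neg.rpow_const (p := q) (Or.inl hL))).congr_deriv ?_
  simp only [Pi.neg_apply]
  rw [rpow_sub_one hx.ne', rpow_sub_one hL]
  field_simp
  ring

noncomputable def hardyLerayProfile (δ t : ℝ) : ℝ := t ^ (1 / 2 : ℝ) * (-log t) ^ (-δ)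

lemma hasDerivAt_hardyLerayProfile (δ : ℝ) {x : ℝ} (hx : 0 < x) (hx1 : x ≠ 1) :
    HasDerivAt (hardyLerayProfile δ)
      (hardyLerayProfile δ x * ((1 / 2 + δ / -log x) / x)) x :=
  (hasDerivAt_rpow_mul_neg_log_rpow (1 / 2) (-δ) hx hx1).congr_deriv (by
    rw [hardyLerayProfile, neg_div, sub_neg_eq_add])

lemma deriv_deriv_hardyLerayProfile (δ : ℝ) {t : ℝ} (ht : 0 < t) (ht1 : t ≠ 1) :
    deriv (deriv (hardyLerayProfile δ)) t =
      (δ * (δ + 1) / log t ^ 2 - 1 / 4) / t ^ 2 * hardyLerayProfile δ t := by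
  have hL : -log t ≠ 0 := neg_ne_zero.2 (log_ne_zero_of_pos_of_ne_one ht ht1)
  have hderiv : deriv (hardyLerayProfile δ) =ᶠ[nhds t]
      fun x => hardyLerayProfile δ x * ((1 / 2 + δ / -log x) / x) := by
    filter_upwards [lt_mem_nhds ht, eventually_ne_nhds ht1] with x hx hx1
    exact (hasDerivAt_hardyLerayProfile δ hx hx1).deriv
  have hfactor := (((hasDerivAt_const t δ).div (hasDerivAt_log ht.ne').neg hL).const_add
    (1 / 2)).div (hasDerivAt_id t) ht.ne'
  rw [hderiv.deriv_eq]
  refine ((hasDerivAt_hardyLerayProfile δ ht ht1).mul hfactor).deriv.trans ?_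
  simp only [id, Pi.neg_apply, Pi.div_apply]
  field_simp
  ring

lemma hardyLerayProfile_equation {α δ : ℝ} (hδ : δ * (δ + 1) = -α) {t : ℝ} (ht : 0 < t)
    (ht1 : t ≠ 1) :
    -deriv (deriv (hardyLerayProfile δ)) t - 1 / 4 * (t ^ 2)⁻¹ * hardyLerayProfile δ t =
      α * (t ^ 2)⁻¹ * (log t ^ 2)⁻¹ * hardyLerayProfile δ t := by
  rw [deriv_deriv_hardyLerayProfile δ ht ht1, hδ]
  ring

lemma mul_add_one_eq_neg_of_eq_sqrt {α δ : ℝ} (hα : α ≤ 1 / 4)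
    (hδ : δ = (√(1 - 4 * α) - 1) / 2) : δ * (δ + 1) = -α := by
  have := sq_sqrt (show 0 ≤ 1 - 4 * α by linarith)
  rw [hδ]
  linear_combination this / 4

lemma weight_mul_hardyLerayProfile_sq (γ δ : ℝ) {t : ℝ} (ht : 0 < t) (ht1 : t < 1) :
    (t ^ 2)⁻¹ * |log t| ^ (-2 * γ) * hardyLerayProfile δ t ^ 2 =
      t⁻¹ * (-log t) ^ (-2 * (γ + δ)) := by
  have hL : 0 < -log t := neg_pos.2 (log_neg ht ht1)
  have hsqrt : (t ^ (1 / 2 : ℝ)) ^ 2 = t := by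
    rw [← rpow_natCast, ← rpow_mul ht.le]; norm_num
  have hlog : ((-log t) ^ (-δ)) ^ 2 = (-log t) ^ (-2 * δ) := by
    rw [← rpow_natCast, ← rpow_mul hL.le]; ring_nf
  rw [hardyLerayProfile, abs_of_neg (log_neg ht ht1), mul_pow, hsqrt, hlog, mul_add,
    rpow_add hL]
  field_simp

lemma integrableOn_Ioo_inv_mul_neg_log_rpow_iff (s : ℝ) {R : ℝ} (hR : 0 < R) (hR1 : R < 1) :
    IntegrableOn (fun t => t⁻¹ * (-log t) ^ s) (Ioo 0 R) ↔ s < -1 := by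
  have himage : (exp ∘ Neg.neg) '' Ioi (-log R) = Ioo 0 R := by
    rw [image_comp, image_neg_Ioi, neg_neg, image_exp_Iio, exp_log hR]
  have hderiv : ∀ x ∈ Ioi (-log R),
      HasDerivWithinAt (exp ∘ Neg.neg) (-exp (-x)) (Ioi (-log R)) x :=
    fun x _ => ((hasDerivAt_neg x).exp.congr_deriv (mul_neg_one _)).hasDerivWithinAt
  have hinj : InjOn (exp ∘ Neg.neg) (Ioi (-log R)) := (exp_injective.comp neg_injective).injOn
  rw [← himage, integrableOn_image_iff_integrableOn_abs_deriv_smul measurableSet_Ioi hderiv hinj,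
    ← integrableOn_Ioi_rpow_iff (neg_pos.2 (log_neg hR hR1))]
  refine integrableOn_congr_fun (fun x _ => ?_) measurableSet_Ioi
  simp [abs_of_pos (exp_pos _)]

lemma neg_two_mul_add_lt_neg_one_iff {α γ δ : ℝ} (hγ : γ ≤ 1)
    (hδ : δ = (√(1 - 4 * α) - 1) / 2) : -2 * (γ + δ) < -1 ↔ α < 1 / 4 - (1 - γ) ^ 2 := by
  subst hδ
  calc -2 * (γ + (√(1 - 4 * α) - 1) / 2) < -1 ↔ 2 * (1 - γ) < √(1 - 4 * α) := by
        constructor <;> intro h <;> linarith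
    _ ↔ (2 * (1 - γ)) ^ 2 < 1 - 4 * α := lt_sqrt (by linarith)
    _ ↔ α < 1 / 4 - (1 - γ) ^ 2 := by constructor <;> intro h <;> linarith

/-- One-dimensional sharpness example: `u_α(t) = t^{1/2} |log t|^{-δ_α}` solves the
critical Hardy–Leray equation on `(0,1)`, and its weighted integrability on `(0,R)`
holds precisely for `α < 1/4 - (1-γ)²`. -/
theorem one_dim_sharpness (α : ℝ) (hα : α ≤ 1 / 4)
    (δ : ℝ) (hδ : δ = (Real.sqrt (1 - 4 * α) - 1) / 2)
    (u : ℝ → ℝ) (hu : ∀ t, u t = t ^ ((1 : ℝ) / 2) * (-Real.log t) ^ (-δ)) :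
    (∀ t ∈ Ioo (0 : ℝ) 1,
      -(deriv (deriv u) t) - (1 / 4) * (t ^ 2)⁻¹ * u t =
        α * (t ^ 2)⁻¹ * ((Real.log t) ^ 2)⁻¹ * u t) ∧
    (∀ γ ≤ (1 : ℝ), ∀ R : ℝ, 0 < R → R < 1 →
      (Integrable (fun t => (t ^ 2)⁻¹ * |Real.log t| ^ (-2 * γ) * (u t) ^ 2)
          (volume.restrict (Ioo 0 R)) ↔
        α < 1 / 4 - (1 - γ) ^ 2)) := by
  obtain rfl : u = hardyLerayProfile δ := funext hu
  refine ⟨fun t ht => hardyLerayProfile_equation (mul_add_one_eq_neg_of_eq_sqrt hα hδ)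
    ht.1 ht.2.ne, fun γ hγ R hR hR1 => ?_⟩
  rw [← neg_two_mul_add_lt_neg_one_iff hγ hδ,
    ← integrableOn_Ioo_inv_mul_neg_log_rpow_iff _ hR hR1]
  exact integrableOn_congr_fun
    (fun t ht => weight_mul_hardyLerayProfile_sq γ δ ht.1 (ht.2.trans hR1)) measurableSet_Ioo
end

section
/- Fix $\alpha \le 1/4$, $N \ge 2$ and set $\delta_\alpha = (\sqrt{1-4\alpha}-1)/2$. The function $u_\alpha(x) = |x|^{(2-N)/2}|\log|x||^{-\delta_\alpha}$ on $B_1 \setminus \{0\}$ is smooth there and satisfies pointwise $-\Delta u_\alpha - \frac{(N-2)^2}{4}|x|^{-2}u_\alpha = \alpha |x|^{-2}|\log|x||^{-2}u_\alpha$ in $B_1 \setminus \{0\}$. -/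
open MeasureTheory Set Metric

/-- The Laplacian of a function on Euclidean space, as the sum of its pure second
partial derivatives. -/
noncomputable def lap {N : ℕ} (φ : EuclideanSpace ℝ (Fin N) → ℝ)
    (x : EuclideanSpace ℝ (Fin N)) : ℝ :=
  ∑ i : Fin N, fderiv ℝ (fun y => fderiv ℝ φ y (EuclideanSpace.single i 1)) x
    (EuclideanSpace.single i 1)


noncomputable def Saux (t : ℝ) : ℝ := -(1/2) * Real.log t
noncomputable def Gaux (c δ t : ℝ) : ℝ := t ^ c * Saux t ^ (-δ)
noncomputable def G1aux (c δ t : ℝ) : ℝ :=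
  c * t ^ (c-1) * Saux t ^ (-δ) + t ^ c * ((δ/2) * Saux t ^ (-δ-1) * t⁻¹)
noncomputable def G2aux (c δ t : ℝ) : ℝ :=
  c*(c-1)*t^(c-2)*Saux t^(-δ) + c*δ*t^(c-1)*Saux t^(-δ-1)*t⁻¹
    + t^c*((δ*(δ+1)/4)*Saux t^(-δ-2)*t⁻¹*t⁻¹ - (δ/2)*Saux t^(-δ-1)*(t^2)⁻¹)

lemma Saux_pos {t : ℝ} (ht : t ∈ Ioo (0:ℝ) 1) : 0 < Saux t := by
  have := Real.log_neg ht.1 ht.2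
  unfold Saux; nlinarith

lemma hasDerivAt_Saux {t : ℝ} (ht : t ∈ Ioo (0:ℝ) 1) :
    HasDerivAt Saux (-(1/2) * t⁻¹) t :=
  (Real.hasDerivAt_log ht.1.ne').const_mul (-(1/2))

lemma hasDerivAt_Gaux (c δ : ℝ) {t : ℝ} (ht : t ∈ Ioo (0:ℝ) 1) :
    HasDerivAt (Gaux c δ) (G1aux c δ t) t := by
  have hs := Saux_pos ht
  have h1 : HasDerivAt (fun r : ℝ => r ^ c) (c * t ^ (c-1)) t :=
    Real.hasDerivAt_rpow_const (Or.inl ht.1.ne')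
  have h2 : HasDerivAt (fun r => Saux r ^ (-δ))
      (-(1/2) * t⁻¹ * -δ * Saux t ^ (-δ-1)) t :=
    (hasDerivAt_Saux ht).rpow_const (Or.inl hs.ne')
  have := h1.mul h2
  refine this.congr_deriv ?_
  unfold G1aux
  ring

lemma hasDerivAt_G1aux (c δ : ℝ) {t : ℝ} (ht : t ∈ Ioo (0:ℝ) 1) :
    HasDerivAt (G1aux c δ) (G2aux c δ t) t := by
  have hs := Saux_pos ht
  have hS := hasDerivAt_Saux ht
  have hS0 : HasDerivAt (fun r => Saux r ^ (-δ))
      (-(1/2) * t⁻¹ * -δ * Saux t ^ (-δ-1)) t :=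
    hS.rpow_const (Or.inl hs.ne')
  have hS1 : HasDerivAt (fun r => Saux r ^ (-δ-1))
      (-(1/2) * t⁻¹ * (-δ-1) * Saux t ^ (-δ-1-1)) t :=
    hS.rpow_const (Or.inl hs.ne')
  have hA : HasDerivAt (fun r : ℝ => c * r ^ (c-1))
      (c * ((c-1) * t ^ (c-1-1))) t :=
    (Real.hasDerivAt_rpow_const (Or.inl ht.1.ne')).const_mul c
  have hB : HasDerivAt (fun r : ℝ => r ^ c) (c * t ^ (c-1)) t :=
    Real.hasDerivAt_rpow_const (Or.inl ht.1.ne')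
  have hinv : HasDerivAt (fun r : ℝ => r⁻¹) (-(t^2)⁻¹) t := hasDerivAt_inv ht.1.ne'
  -- term1 : fun r => (c * r^(c-1)) * Saux r^(-δ)
  have hterm1 := hA.mul hS0
  -- inner : fun r => ((δ/2) * Saux r^(-δ-1)) * r⁻¹
  have hinner := ((hS1.const_mul (δ/2)).mul hinv)
  have hterm2 := hB.mul hinner
  have := hterm1.add hterm2
  have he1 : t ^ (c-1-1) = t ^ (c-2) := by congr 1; ring
  have he2 : Saux t ^ (-δ-1-1) = Saux t ^ (-δ-2) := by congr 1; ring
  rw [he1, he2] at this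
  refine this.congr_deriv ?_
  simp only [Pi.mul_apply]
  unfold G2aux; ring

lemma contDiffAt_Gaux (c δ : ℝ) {t : ℝ} (ht : t ∈ Ioo (0:ℝ) 1) :
    ContDiffAt ℝ (⊤ : ℕ∞) (Gaux c δ) t := by
  have hs := Saux_pos ht
  have h1 : ContDiffAt ℝ (⊤ : ℕ∞) (fun r : ℝ => r ^ c) t :=
    Real.contDiffAt_rpow_const_of_ne ht.1.ne'
  have hSc : ContDiffAt ℝ (⊤ : ℕ∞) Saux t :=
    contDiffAt_const.mul (Real.contDiffAt_log.mpr ht.1.ne')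
  have h2 : ContDiffAt ℝ (⊤ : ℕ∞) (fun r => Saux r ^ (-δ)) t :=
    hSc.rpow_const_of_ne hs.ne'
  exact h1.mul h2

lemma final_alg (n δ α t : ℝ) (ht : t ∈ Ioo (0:ℝ) 1) (hα : α = -(δ^2+δ)) :
    -(2*n*G1aux ((2-n)/4) δ t + 4*t*G2aux ((2-n)/4) δ t)
      - ((n-2)^2/4) * t⁻¹ * Gaux ((2-n)/4) δ t
      = α * t⁻¹ * ((Saux t)^2)⁻¹ * Gaux ((2-n)/4) δ t := by
  have ht0 := ht.1
  have hs := Saux_pos ht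
  have e1 : t ^ ((2-n)/4-1) = t^((2-n)/4) / t := by
    rw [Real.rpow_sub ht0, Real.rpow_one]
  have e2 : t ^ ((2-n)/4-2) = t^((2-n)/4) / t^2 := by
    rw [Real.rpow_sub ht0, show (2:ℝ) = ((2:ℕ):ℝ) by norm_num, Real.rpow_natCast]
  have e3 : Saux t ^ (-δ-1) = Saux t^(-δ) / Saux t := by
    rw [Real.rpow_sub hs, Real.rpow_one]
  have e4 : Saux t ^ (-δ-2) = Saux t^(-δ) / Saux t^2 := by
    rw [Real.rpow_sub hs, show (2:ℝ) = ((2:ℕ):ℝ) by norm_num, Real.rpow_natCast]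
  unfold G1aux G2aux Gaux
  rw [hα, e1, e2, e3, e4]
  field_simp
  ring


/-- The explicit function `u_α(x) = |x|^{(2-N)/2} |log|x||^{-δ_α}` solves the critical
Hardy–Leray equation in the punctured unit ball. -/
theorem explicit_solution_critical_equation {N : ℕ} (hN : 2 ≤ N) (α : ℝ)
    (hα : α ≤ 1 / 4) (δ : ℝ) (hδ : δ = (Real.sqrt (1 - 4 * α) - 1) / 2)
    (u : EuclideanSpace ℝ (Fin N) → ℝ)
    (hu : ∀ x, u x = ‖x‖ ^ ((2 - (N : ℝ)) / 2) * (-Real.log ‖x‖) ^ (-δ)) :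
    ContDiffOn ℝ (⊤ : ℕ∞) u (ball (0 : EuclideanSpace ℝ (Fin N)) 1 \ {0}) ∧
    ∀ x ∈ ball (0 : EuclideanSpace ℝ (Fin N)) 1 \ {0},
      -(lap u x) - (((N : ℝ) - 2) ^ 2 / 4) * (‖x‖ ^ 2)⁻¹ * u x =
        α * (‖x‖ ^ 2)⁻¹ * ((Real.log ‖x‖) ^ 2)⁻¹ * u x := by
  classical
  set c : ℝ := (2 - (N : ℝ)) / 4 with hc
  set U : Set (EuclideanSpace ℝ (Fin N)) := ball 0 1 \ {0} with hU
  have hUopen : IsOpen U := isOpen_ball.sdiff isClosed_singleton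
  -- basic facts for points of U
  have hmem : ∀ y ∈ U, ‖y‖ ^ 2 ∈ Set.Ioo (0:ℝ) 1 := by
    intro y hy
    have h1 : ‖y‖ < 1 := mem_ball_zero_iff.mp hy.1
    have h0 : 0 < ‖y‖ := norm_pos_iff.mpr (by simpa using hy.2)
    constructor
    · positivity
    · nlinarith
  -- u agrees with Gaux ∘ (‖·‖²) on U
  have hueq : ∀ y ∈ U, u y = Gaux c δ (‖y‖ ^ 2) := by
    intro y hy
    have h0 : 0 < ‖y‖ := norm_pos_iff.mpr (by simpa using hy.2)
    rw [hu y]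
    unfold Gaux Saux
    rw [Real.log_pow]
    have h2 : (‖y‖ ^ 2 : ℝ) ^ c = ‖y‖ ^ ((2 - (N:ℝ))/2) := by
      rw [← Real.rpow_natCast ‖y‖ 2, ← Real.rpow_mul (norm_nonneg y)]
      norm_num [hc]
      ring_nf
    rw [h2]
    congr 1
    congr 1
    push_cast
    ring
  -- the fderiv of u on U
  have hqd : ∀ y : EuclideanSpace ℝ (Fin N),
      HasFDerivAt (fun z : EuclideanSpace ℝ (Fin N) => ‖z‖ ^ 2)
        ((2:ℝ) • (innerSL ℝ y)) y := by
    intro y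
    have h := (hasFDerivAt_id y).norm_sq
    have he : ((2:ℝ) • (innerSL ℝ y)) = (2:ℕ) • ((innerSL ℝ (id y)).comp (ContinuousLinearMap.id ℝ _)) := by
      ext z; simp
    rw [he]; exact h
  have huderiv : ∀ y ∈ U,
      HasFDerivAt u ((G1aux c δ (‖y‖^2)) • ((2:ℝ) • (innerSL ℝ y))) y := by
    intro y hy
    have h1 : HasFDerivAt (Gaux c δ ∘ fun z : EuclideanSpace ℝ (Fin N) => ‖z‖ ^ 2)
        ((G1aux c δ (‖y‖^2)) • ((2:ℝ) • (innerSL ℝ y))) y :=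
      (hasDerivAt_Gaux c δ (hmem y hy)).comp_hasFDerivAt y (hqd y)
    refine h1.congr_of_eventuallyEq ?_
    filter_upwards [hUopen.mem_nhds hy] with z hz
    exact hueq z hz
  -- first part: smoothness
  have hsmooth : ContDiffOn ℝ (⊤ : ℕ∞) u U := by
    intro x hx
    have h1 : ContDiffAt ℝ (⊤ : ℕ∞) (Gaux c δ ∘ fun z : EuclideanSpace ℝ (Fin N) => ‖z‖ ^ 2) x :=
      (contDiffAt_Gaux c δ (hmem x hx)).comp x (contDiff_norm_sq ℝ).contDiffAt
    exact h1.contDiffWithinAt.congr (fun y hy => hueq y hy) (hueq x hx)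
  refine ⟨hsmooth, ?_⟩
  intro x hx
  have ht := hmem x hx
  have h0 : 0 < ‖x‖ := norm_pos_iff.mpr (by simpa using hx.2)
  set t : ℝ := ‖x‖ ^ 2 with htdef
  -- compute lap u x
  have hlap : lap u x = 2 * (N:ℝ) * G1aux c δ t + 4 * t * G2aux c δ t := by
    have hterm : ∀ i : Fin N,
        fderiv ℝ (fun y => fderiv ℝ u y (EuclideanSpace.single i 1)) x
          (EuclideanSpace.single i 1)
          = 2 * G1aux c δ t + 4 * (x i)^2 * G2aux c δ t := by
      intro i
      have hE : (fun y => fderiv ℝ u y (EuclideanSpace.single i 1)) =ᶠ[nhds x]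
          (fun y => G1aux c δ (‖y‖^2) * (2 * y i)) := by
        filter_upwards [hUopen.mem_nhds hx] with y hy
        rw [(huderiv y hy).fderiv]
        simp [EuclideanSpace.inner_single_right, real_inner_comm]
        try ring
      rw [hE.fderiv_eq]
      -- derivative of v i
      have hA : HasFDerivAt (fun y : EuclideanSpace ℝ (Fin N) => G1aux c δ (‖y‖^2))
          ((G2aux c δ t) • ((2:ℝ) • (innerSL ℝ x))) x :=
        by have := (hasDerivAt_G1aux c δ ht).comp_hasFDerivAt x (hqd x); exact this
      have hB : HasFDerivAt (fun y : EuclideanSpace ℝ (Fin N) => 2 * y i)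
          ((2:ℝ) • (EuclideanSpace.proj (𝕜 := ℝ) i)) x := by
        simpa [Pi.smul_def] using ((2:ℝ) • (EuclideanSpace.proj (𝕜 := ℝ) i)).hasFDerivAt (x := x)
      have hv := hA.mul hB
      rw [show (fun y : EuclideanSpace ℝ (Fin N) => G1aux c δ (‖y‖^2) * (2 * y i)) = ((fun y : EuclideanSpace ℝ (Fin N) => G1aux c δ (‖y‖^2)) * fun y => 2 * y i) from rfl, hv.fderiv]
      simp [EuclideanSpace.inner_single_right, real_inner_comm, EuclideanSpace.single_apply]
      try ring
    unfold lap
    rw [Finset.sum_congr rfl (fun i _ => hterm i)]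
    rw [Finset.sum_add_distrib, Finset.sum_const, ← Finset.sum_mul]
    have hsum : ∑ i : Fin N, (x i)^2 = t := by
      rw [htdef, EuclideanSpace.norm_sq_eq]
      simp [Real.norm_eq_abs, sq_abs]
    have h4 : ∑ i : Fin N, 4 * (x i)^2 = 4 * t := by
      rw [← hsum, Finset.mul_sum]
    rw [h4]
    simp [Finset.card_univ, nsmul_eq_mul]
    ring
  -- final algebraic identity
  have hα' : α = -(δ^2+δ) := by
    have h1 : Real.sqrt (1 - 4*α) = 2*δ + 1 := by rw [hδ]; ring
    have h2 : (2*δ+1)^2 = 1 - 4*α := by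
      rw [← h1]; exact Real.sq_sqrt (by linarith)
    nlinarith [h2]
  have hlog : Real.log ‖x‖ = -(Saux t) := by
    unfold Saux
    rw [htdef, Real.log_pow]
    push_cast
    ring
  rw [hlap, hueq x hx, hlog]
  have := final_alg (N:ℝ) δ α t ht hα'
  rw [hc]
  calc -(2 * ↑N * G1aux ((2 - ↑N)/4) δ t + 4 * t * G2aux ((2 - ↑N)/4) δ t)
      - ((↑N - 2) ^ 2 / 4) * t⁻¹ * Gaux ((2 - ↑N)/4) δ t
      = α * t⁻¹ * ((Saux t)^2)⁻¹ * Gaux ((2 - ↑N)/4) δ t := this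
    _ = α * t⁻¹ * ((-(Saux t))^2)⁻¹ * Gaux ((2 - ↑N)/4) δ t := by ring
end
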